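/- arXiv:1806.00188 — 4 statements merged into one kernel-verified Lean document; each statement's English description precedes it below -/
import Mathlib

section
/- The optimal values of the edge-selection problem (maximize f_e(E') over E' ⊆ E subject to c_w(E') ≤ b) and the vertex-selection problem (maximize f_e(edges(W)) over W ⊆ V subject to Σ_{v∈W} w(v) ≤ b) are equal, where f_e is normalized, monotone, and submodular. -/
/-!
A minimum-weight cover `C` of a feasible edge set `E'` is a feasible vertex set with
`E' ⊆ edges(C)`, and conversely every vertex set `W` covers `edges(W)`, so `c_w(edges(W)) ≤ w(W)`.
By monotonicity of `f_e`, every value of either problem is dominated by a value of the other,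
so the two suprema agree.
-/

open scoped Classical
open Finset

/-- The set of edges of `G` having at least one endpoint in `W`. -/
noncomputable def edgesOf {V : Type*} [Fintype V] [DecidableEq V]
    (G : SimpleGraph V) (W : Finset V) : Finset (Sym2 V) :=
  Finset.univ.filter (fun e => e ∈ G.edgeSet ∧ ∃ v ∈ W, v ∈ e)

/-- `C` is a vertex cover of the edge set `E'`. -/
def IsCover {V : Type*} (C : Finset V) (E' : Finset (Sym2 V)) : Prop :=
  ∀ e ∈ E', ∃ v ∈ C, v ∈ e

/-- Minimum weight of a vertex cover of the edge set `E'`. -/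
noncomputable def coverWeight {V : Type*} [Fintype V] [DecidableEq V]
    (w : V → ℝ) (E' : Finset (Sym2 V)) : ℝ :=
  sInf {x : ℝ | ∃ C : Finset V, IsCover C E' ∧ x = ∑ v ∈ C, w v}

section Cover

variable {V : Type*} [Fintype V]

lemma isCover_univ (E' : Finset (Sym2 V)) : IsCover Finset.univ E' :=
  fun e _ => ⟨e.out.1, Finset.mem_univ _, e.out_fst_mem⟩

lemma finite_setOf_isCover_sum (w : V → ℝ) (E' : Finset (Sym2 V)) :
    {x : ℝ | ∃ C : Finset V, IsCover C E' ∧ x = ∑ v ∈ C, w v}.Finite :=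
  (Set.finite_range fun C : Finset V => ∑ v ∈ C, w v).subset <| by
    rintro x ⟨C, -, rfl⟩
    exact ⟨C, rfl⟩

lemma exists_isCover_sum_eq_coverWeight [DecidableEq V] (w : V → ℝ) (E' : Finset (Sym2 V)) :
    ∃ C : Finset V, IsCover C E' ∧ coverWeight w E' = ∑ v ∈ C, w v := by
  have hne : {x : ℝ | ∃ C : Finset V, IsCover C E' ∧ x = ∑ v ∈ C, w v}.Nonempty :=
    ⟨_, Finset.univ, isCover_univ E', rfl⟩
  exact hne.csInf_mem (finite_setOf_isCover_sum w E')

lemma coverWeight_le_sum [DecidableEq V] (w : V → ℝ) {C : Finset V} {E' : Finset (Sym2 V)}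
    (hC : IsCover C E') : coverWeight w E' ≤ ∑ v ∈ C, w v :=
  csInf_le (finite_setOf_isCover_sum w E').bddBelow ⟨C, hC, rfl⟩

end Cover

section EdgesOf

variable {V : Type*} [Fintype V] [DecidableEq V] (G : SimpleGraph V)

lemma mem_edgesOf {W : Finset V} {e : Sym2 V} :
    e ∈ edgesOf G W ↔ e ∈ G.edgeSet ∧ ∃ v ∈ W, v ∈ e := by
  simp [edgesOf]

lemma isCover_edgesOf (W : Finset V) : IsCover W (edgesOf G W) :=
  fun _ he => ((mem_edgesOf G).1 he).2

lemma subset_edgesOf {C : Finset V} {E' : Finset (Sym2 V)} (hE' : ∀ e ∈ E', e ∈ G.edgeSet)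
    (hC : IsCover C E') : E' ⊆ edgesOf G C :=
  fun e he => (mem_edgesOf G).2 ⟨hE' e he, hC e he⟩

end EdgesOf

theorem OPTe_eq_OPTv_general
    {V : Type*} [Fintype V] [DecidableEq V] (G : SimpleGraph V)
    (w : V → ℝ) (b : ℝ)
    (fe : Finset (Sym2 V) → ℝ)
    (hmono : ∀ A B, A ⊆ B → fe A ≤ fe B) :
    sSup {y : ℝ | ∃ E' : Finset (Sym2 V),
        (∀ e ∈ E', e ∈ G.edgeSet) ∧ coverWeight w E' ≤ b ∧ y = fe E'} =
    sSup {y : ℝ | ∃ W : Finset V, (∑ v ∈ W, w v) ≤ b ∧ y = fe (edgesOf G W)} := by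
  apply csSup_eq_csSup_of_forall_exists_le
  · rintro _ ⟨E', hE', hcost, rfl⟩
    obtain ⟨C, hC, hCw⟩ := exists_isCover_sum_eq_coverWeight w E'
    exact ⟨_, ⟨C, hCw ▸ hcost, rfl⟩, hmono _ _ (subset_edgesOf G hE' hC)⟩
  · rintro _ ⟨W, hW, rfl⟩
    have hfeasible : coverWeight w (edgesOf G W) ≤ b :=
      (coverWeight_le_sum w (isCover_edgesOf G W)).trans hW
    exact ⟨_, ⟨edgesOf G W, fun _ he => ((mem_edgesOf G).1 he).1, hfeasible, rfl⟩, le_rfl⟩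

/-- The optimal values of the edge-selection problem and the vertex-selection
problem coincide. -/
theorem OPTe_eq_OPTv
    {V : Type*} [Fintype V] [DecidableEq V] (G : SimpleGraph V)
    (w : V → ℝ) (hw : ∀ v, 0 < w v) (b : ℝ) (hb : 0 < b)
    (fe : Finset (Sym2 V) → ℝ)
    (hnonneg : ∀ A, 0 ≤ fe A)
    (hnorm : fe ∅ = 0)
    (hmono : ∀ A B, A ⊆ B → fe A ≤ fe B)
    (hsub : ∀ A B, fe (A ∪ B) + fe (A ∩ B) ≤ fe A + fe B) :
    sSup {y : ℝ | ∃ E' : Finset (Sym2 V),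
        (∀ e ∈ E', e ∈ G.edgeSet) ∧ coverWeight w E' ≤ b ∧ y = fe E'} =
    sSup {y : ℝ | ∃ W : Finset V, (∑ v ∈ W, w v) ≤ b ∧ y = fe (edgesOf G W)} :=
  OPTe_eq_OPTv_general G w b fe hmono
end

section
/- The function f(E') = log det(I_init + Σ_{e∈E'} p(e)·I_e) − log det(I_init), where I_init is positive definite and each I_e is positive semidefinite with p(e) > 0, is normalized, monotone, and submodular on subsets of the finite index set E. -/
/-!
For positive definite `M` and positive semidefinite `P = S²`, the matrix determinant lemma gives
`det (M + P) = det M · det (1 + S M⁻¹ S)`. Inversion is antitone and `det` is monotone in the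
Loewner order on positive definite matrices, so the gain `det (M + P) / det M` can only decrease
as `M` grows. With `M = I_init + ∑_{A ∩ B} p(e) I_e ≤ I_init + ∑_A p(e) I_e` and
`P = ∑_{B \ A} p(e) I_e`, taking logarithms gives submodularity; monotonicity is the monotonicity
of `det` itself.
-/

open Finset Matrix
open scoped MatrixOrder

namespace Matrix

variable {n : Type*} [Fintype n] [DecidableEq n]

lemma one_le_det_one_add {C : Matrix n n ℝ} (hC : 0 ≤ C) : 1 ≤ (1 + C).det := by
  have hH := (nonneg_iff_posSemidef.1 hC).isHermitian
  set U : Matrix n n ℝ := ↑hH.eigenvectorUnitary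
  have hC' : C = U * diagonal hH.eigenvalues * star U := by
    conv_lhs => rw [hH.spectral_theorem, Unitary.conjStarAlgAut_apply]
    rfl
  rw [hC', det_one_add_mul_comm, ← Matrix.mul_assoc, Unitary.coe_star_mul_self, Matrix.one_mul,
    ← diagonal_one, diagonal_add, det_diagonal]
  exact Finset.one_le_prod fun i _ => le_add_of_nonneg_right
    ((nonneg_iff_posSemidef.1 hC).eigenvalues_nonneg i)

lemma det_add_eq_det_mul_det_one_add_sqrt {A P : Matrix n n ℝ} (hA : IsUnit A.det)
    (hP : 0 ≤ P) :
    (A + P).det = A.det * (1 + CFC.sqrt P * A⁻¹ * CFC.sqrt P).det := by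
  conv_lhs => rw [← CFC.sqrt_mul_sqrt_self P hP]
  exact det_add_mul _ _ hA

lemma det_le_det_of_le {A B : Matrix n n ℝ} (hA : A.PosDef) (hAB : A ≤ B) : A.det ≤ B.det := by
  obtain ⟨P, hP, rfl⟩ : ∃ P, 0 ≤ P ∧ B = A + P := ⟨B - A, sub_nonneg.2 hAB, by abel⟩
  rw [det_add_eq_det_mul_det_one_add_sqrt hA.det_pos.ne'.isUnit hP]
  refine le_mul_of_one_le_right hA.det_pos.le (one_le_det_one_add ?_)
  exact conjugate_nonneg_of_nonneg hA.inv.posSemidef.nonneg (CFC.sqrt_nonneg P)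

/-- With `Δ = B - A`, the identity `A⁻¹ - B⁻¹ = B⁻¹ (Δ + Δ A⁻¹ Δ) B⁻¹` exhibits the difference
as a conjugate of a positive semidefinite matrix. -/
lemma inv_le_inv_of_le {A B : Matrix n n ℝ} (hA : A.PosDef) (hAB : A ≤ B) : B⁻¹ ≤ A⁻¹ := by
  obtain ⟨Δ, hΔ, rfl⟩ : ∃ Δ, 0 ≤ Δ ∧ B = A + Δ := ⟨B - A, sub_nonneg.2 hAB, by abel⟩
  have hB : (A + Δ).PosDef := hA.add_posSemidef (nonneg_iff_posSemidef.1 hΔ)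
  have hAA : A * A⁻¹ = 1 := mul_nonsing_inv _ hA.det_pos.ne'.isUnit
  have hBB : (A + Δ)⁻¹ * (A + Δ) = 1 := nonsing_inv_mul _ hB.det_pos.ne'.isUnit
  have hBB' : (A + Δ) * (A + Δ)⁻¹ = 1 := mul_nonsing_inv _ hB.det_pos.ne'.isUnit
  have hdiff : A⁻¹ - (A + Δ)⁻¹ = (A + Δ)⁻¹ * (Δ + Δ * A⁻¹ * Δ) * (A + Δ)⁻¹ :=
    calc A⁻¹ - (A + Δ)⁻¹ = (A + Δ)⁻¹ * ((A + Δ) - A) * A⁻¹ := by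
          rw [Matrix.mul_sub, Matrix.sub_mul, hBB, Matrix.one_mul, Matrix.mul_assoc, hAA,
            Matrix.mul_one]
      _ = (A + Δ)⁻¹ * (Δ * A⁻¹ * (A + Δ)) * (A + Δ)⁻¹ := by
          simp only [add_sub_cancel_left, Matrix.mul_assoc, hBB', Matrix.mul_one]
      _ = (A + Δ)⁻¹ * (Δ + Δ * A⁻¹ * Δ) * (A + Δ)⁻¹ := by
          rw [Matrix.mul_add, Matrix.mul_assoc Δ, nonsing_inv_mul _ hA.det_pos.ne'.isUnit,
            Matrix.mul_one]
  rw [← sub_nonneg, hdiff]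
  refine conjugate_nonneg_of_nonneg (add_nonneg hΔ ?_) hB.inv.posSemidef.nonneg
  exact conjugate_nonneg_of_nonneg hA.inv.posSemidef.nonneg hΔ

lemma det_add_mul_det_le_det_add_mul_det {M N P : Matrix n n ℝ} (hM : M.PosDef) (hMN : M ≤ N)
    (hP : 0 ≤ P) : (N + P).det * M.det ≤ (M + P).det * N.det := by
  have hN : N.PosDef := by simpa using hM.add_posSemidef (le_iff.1 hMN)
  set S := CFC.sqrt P
  have hS : 0 ≤ S := CFC.sqrt_nonneg P
  have hgain : (1 + S * N⁻¹ * S).det ≤ (1 + S * M⁻¹ * S).det := by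
    refine det_le_det_of_le ?_ (add_le_add_right ?_ 1)
    · exact PosDef.one.add_posSemidef (nonneg_iff_posSemidef.1
        (conjugate_nonneg_of_nonneg hN.inv.posSemidef.nonneg hS))
    · exact conjugate_le_conjugate_of_nonneg (inv_le_inv_of_le hM hMN) hS
  rw [det_add_eq_det_mul_det_one_add_sqrt hN.det_pos.ne'.isUnit hP,
    det_add_eq_det_mul_det_one_add_sqrt hM.det_pos.ne'.isUnit hP]
  calc N.det * (1 + S * N⁻¹ * S).det * M.det
      = N.det * M.det * (1 + S * N⁻¹ * S).det := by ring
    _ ≤ N.det * M.det * (1 + S * M⁻¹ * S).det :=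
      mul_le_mul_of_nonneg_left hgain (mul_pos hN.det_pos hM.det_pos).le
    _ = M.det * (1 + S * M⁻¹ * S).det * N.det := by ring

end Matrix

lemma Matrix.PosDef.add_sum {n ι : Type*} {M : Matrix n n ℝ} {Q : ι → Matrix n n ℝ}
    (hM : M.PosDef) (hQ : ∀ i, 0 ≤ Q i) (A : Finset ι) : (M + ∑ i ∈ A, Q i).PosDef :=
  hM.add_posSemidef (nonneg_iff_posSemidef.1 (sum_nonneg fun i _ => hQ i))

section LogDetOfSum

variable {n ι : Type*} [Fintype n] [DecidableEq n] {M : Matrix n n ℝ} {Q : ι → Matrix n n ℝ}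

lemma log_det_add_sum_mono (hM : M.PosDef) (hQ : ∀ i, 0 ≤ Q i) {A B : Finset ι} (hAB : A ⊆ B) :
    Real.log (M + ∑ i ∈ A, Q i).det ≤ Real.log (M + ∑ i ∈ B, Q i).det :=
  Real.log_le_log (hM.add_sum hQ A).det_pos <| det_le_det_of_le (hM.add_sum hQ A) <|
    add_le_add_right (sum_le_sum_of_subset_of_nonneg hAB fun i _ _ => hQ i) M

lemma log_det_add_sum_submodular [DecidableEq ι] (hM : M.PosDef) (hQ : ∀ i, 0 ≤ Q i)
    (A B : Finset ι) :
    Real.log (M + ∑ i ∈ A ∪ B, Q i).det + Real.log (M + ∑ i ∈ A ∩ B, Q i).det ≤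
      Real.log (M + ∑ i ∈ A, Q i).det + Real.log (M + ∑ i ∈ B, Q i).det := by
  have hunion : M + ∑ i ∈ A ∪ B, Q i = (M + ∑ i ∈ A, Q i) + ∑ i ∈ B \ A, Q i := by
    rw [← union_sdiff_self_eq_union, sum_union disjoint_sdiff, add_assoc]
  have hB : M + ∑ i ∈ B, Q i = (M + ∑ i ∈ A ∩ B, Q i) + ∑ i ∈ B \ A, Q i := by
    rw [inter_comm, add_assoc, sum_inter_add_sum_sdiff]
  have hdet := det_add_mul_det_le_det_add_mul_det (hM.add_sum hQ (A ∩ B))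
    (add_le_add_right (sum_le_sum_of_subset_of_nonneg inter_subset_left fun i _ _ => hQ i) M)
    (sum_nonneg (s := B \ A) fun i _ => hQ i)
  rw [← hunion, ← hB] at hdet
  have hpos (C : Finset ι) := (hM.add_sum hQ C).det_pos
  have := Real.log_le_log (mul_pos (hpos _) (hpos _)) hdet
  rw [Real.log_mul (hpos _).ne' (hpos _).ne', Real.log_mul (hpos _).ne' (hpos _).ne'] at this
  linarith

end LogDetOfSum

theorem fFIM_normalized_monotone_submodular_general
    {E : Type*} [DecidableEq E] {d : ℕ}
    (Iinit : Matrix (Fin d) (Fin d) ℝ) (hinit : Iinit.PosDef)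
    (Ie : E → Matrix (Fin d) (Fin d) ℝ) (hIe : ∀ e, (Ie e).PosSemidef)
    (p : E → ℝ) (hp : ∀ e, 0 < p e ∧ p e ≤ 1) :
    (fun A : Finset E =>
        Real.log (Iinit + ∑ e ∈ A, p e • Ie e).det - Real.log Iinit.det) ∅ = 0 ∧
    (∀ A B : Finset E, A ⊆ B →
      (fun A : Finset E =>
        Real.log (Iinit + ∑ e ∈ A, p e • Ie e).det - Real.log Iinit.det) A ≤
      (fun A : Finset E =>
        Real.log (Iinit + ∑ e ∈ A, p e • Ie e).det - Real.log Iinit.det) B) ∧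
    (∀ A B : Finset E,
      (fun A : Finset E =>
        Real.log (Iinit + ∑ e ∈ A, p e • Ie e).det - Real.log Iinit.det) (A ∪ B) +
      (fun A : Finset E =>
        Real.log (Iinit + ∑ e ∈ A, p e • Ie e).det - Real.log Iinit.det) (A ∩ B) ≤
      (fun A : Finset E =>
        Real.log (Iinit + ∑ e ∈ A, p e • Ie e).det - Real.log Iinit.det) A +
      (fun A : Finset E =>
        Real.log (Iinit + ∑ e ∈ A, p e • Ie e).det - Real.log Iinit.det) B) := by
  have hQ : ∀ e, 0 ≤ p e • Ie e := fun e => smul_nonneg (hp e).1.le (hIe e).nonneg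
  refine ⟨by simp, fun A B hAB => ?_, fun A B => ?_⟩
  · exact sub_le_sub_right (log_det_add_sum_mono hinit hQ hAB) _
  · linarith [log_det_add_sum_submodular hinit hQ A B]

/-- The D-criterion gain
`f(E') = log det (I_init + ∑_{e∈E'} p(e) • I_e) - log det I_init`
is normalized, monotone and submodular. -/
theorem fFIM_normalized_monotone_submodular
    {E : Type*} [Fintype E] [DecidableEq E] {d : ℕ}
    (Iinit : Matrix (Fin d) (Fin d) ℝ) (hinit : Iinit.PosDef)
    (Ie : E → Matrix (Fin d) (Fin d) ℝ) (hIe : ∀ e, (Ie e).PosSemidef)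
    (p : E → ℝ) (hp : ∀ e, 0 < p e ∧ p e ≤ 1) :
    (fun A : Finset E =>
        Real.log (Iinit + ∑ e ∈ A, p e • Ie e).det - Real.log Iinit.det) ∅ = 0 ∧
    (∀ A B : Finset E, A ⊆ B →
      (fun A : Finset E =>
        Real.log (Iinit + ∑ e ∈ A, p e • Ie e).det - Real.log Iinit.det) A ≤
      (fun A : Finset E =>
        Real.log (Iinit + ∑ e ∈ A, p e • Ie e).det - Real.log Iinit.det) B) ∧
    (∀ A B : Finset E,
      (fun A : Finset E =>
        Real.log (Iinit + ∑ e ∈ A, p e • Ie e).det - Real.log Iinit.det) (A ∪ B) +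
      (fun A : Finset E =>
        Real.log (Iinit + ∑ e ∈ A, p e • Ie e).det - Real.log Iinit.det) (A ∩ B) ≤
      (fun A : Finset E =>
        Real.log (Iinit + ∑ e ∈ A, p e • Ie e).det - Real.log Iinit.det) A +
      (fun A : Finset E =>
        Real.log (Iinit + ∑ e ∈ A, p e • Ie e).det - Real.log Iinit.det) B) :=
  fFIM_normalized_monotone_submodular_general Iinit hinit Ie hIe p hp
end

section
/- For a normalized monotone submodular function f on a finite ground set V and unit weights, the greedy algorithm that for b rounds adds an element with maximum marginal gain produces a set S_b with f(S_b) ≥ (1 − 1/e) · max{f(S) : |S| ≤ b}. -/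
/-!
Let `A` be the current greedy set and `T` any set with `#T ≤ b`. By submodularity the gain of adding
all of `T` to `A` is at most the sum of the single-element gains, each of which is at most the greedy
gain, so the greedy step closes at least a `1/b` fraction of the gap `f T - f A`. After `b` steps the gap
is at most `(1 - 1/b)^b f T ≤ f T / e`.
-/

open Finset

section

variable {V : Type*} [DecidableEq V] {f : Finset V → ℝ}

lemma marginal_gain_antitone (hmono : Monotone f)
    (hsub : ∀ A B, f (A ∪ B) + f (A ∩ B) ≤ f A + f B) {A B : Finset V} (hAB : A ⊆ B) (v : V) :
    f (insert v B) - f B ≤ f (insert v A) - f A := by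
  by_cases hv : v ∈ B
  · rw [insert_eq_self.mpr hv, sub_self, sub_nonneg]
    exact hmono (subset_insert v A)
  · have hunion : insert v A ∪ B = insert v B := by
      rw [insert_union, union_eq_right.mpr hAB]
    have hinter : insert v A ∩ B = A := by
      rw [insert_inter_of_notMem hv, inter_eq_left.mpr hAB]
    have := hsub (insert v A) B
    rw [hunion, hinter] at this
    linarith

lemma le_add_sum_marginal_gain (hmono : Monotone f)
    (hsub : ∀ A B, f (A ∪ B) + f (A ∩ B) ≤ f A + f B) (A T : Finset V) :
    f (A ∪ T) ≤ f A + ∑ v ∈ T, (f (insert v A) - f A) := by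
  induction T using Finset.induction with
  | empty => simp
  | insert a T ha ih =>
    rw [sum_insert ha, union_insert]
    have := marginal_gain_antitone hmono hsub (subset_union_left (s₁ := A) (s₂ := T)) a
    linarith

lemma sub_le_card_mul_greedy_gain (hmono : Monotone f)
    (hsub : ∀ A B, f (A ∪ B) + f (A ∩ B) ≤ f A + f B) {A : Finset V} {v : V}
    (hv : ∀ u, f (insert u A) ≤ f (insert v A)) (T : Finset V) :
    f T - f A ≤ #T * (f (insert v A) - f A) := by
  have hsum : ∑ u ∈ T, (f (insert u A) - f A) ≤ #T * (f (insert v A) - f A) := by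
    rw [← nsmul_eq_mul, ← sum_const]
    exact sum_le_sum fun u _ ↦ sub_le_sub_right (hv u) _
  linarith [hmono (subset_union_right (s₁ := A) (s₂ := T)), le_add_sum_marginal_gain hmono hsub A T]

lemma greedy_gap_le (hmono : Monotone f)
    (hsub : ∀ A B, f (A ∪ B) + f (A ∩ B) ≤ f A + f B) {A : Finset V} {v : V}
    (hv : ∀ u, f (insert u A) ≤ f (insert v A)) {b : ℕ} (hb : 0 < b) {T : Finset V}
    (hT : #T ≤ b) :
    f T - f (insert v A) ≤ (1 - 1 / b) * (f T - f A) := by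
  have hgain : 0 ≤ f (insert v A) - f A := sub_nonneg.mpr (hmono (subset_insert v A))
  have hbT : f T - f A ≤ b * (f (insert v A) - f A) :=
    (sub_le_card_mul_greedy_gain hmono hsub hv T).trans
      (mul_le_mul_of_nonneg_right (by exact_mod_cast hT) hgain)
  have hclosed : (f T - f A) / b ≤ f (insert v A) - f A :=
    (div_le_iff₀' (by exact_mod_cast hb)).mpr hbT
  have hsplit : (1 - 1 / (b : ℝ)) * (f T - f A) = f T - f A - (f T - f A) / b := by ring
  linarith

end

theorem greedy_one_minus_inv_e_general
    {V : Type*} [DecidableEq V]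
    (f : Finset V → ℝ)
    (hnorm : f ∅ = 0)
    (hmono : ∀ A B, A ⊆ B → f A ≤ f B)
    (hsub : ∀ A B, f (A ∪ B) + f (A ∩ B) ≤ f A + f B)
    (b : ℕ)
    (S : ℕ → Finset V) (hS0 : S 0 = ∅)
    (hstep : ∀ n, n < b → ∃ v, v ∉ S n ∧ S (n + 1) = insert v (S n) ∧
      ∀ u, f (insert u (S n)) ≤ f (insert v (S n))) :
    ∀ T : Finset V, T.card ≤ b → (1 - 1 / Real.exp 1) * f T ≤ f (S b) := by
  intro T hT
  have hmono' : Monotone f := fun A B ↦ hmono A B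
  obtain rfl | hb := Nat.eq_zero_or_pos b
  · rw [card_eq_zero.mp (Nat.le_zero.mp hT), hS0, hnorm, mul_zero]
  have hdecay : ∀ n < b, f T - f (S (n + 1)) ≤ (1 - 1 / b) * (f T - f (S n)) := fun n hn ↦ by
    obtain ⟨v, -, hSv, hv⟩ := hstep n hn
    exact hSv ▸ greedy_gap_le hmono' hsub hv hb hT
  have hratio : (0 : ℝ) ≤ 1 - 1 / b :=
    sub_nonneg.mpr (div_le_one_of_le₀ (Nat.one_le_cast.mpr hb) b.cast_nonneg)
  have hgap := le_geom (u := fun n ↦ f T - f (S n)) hratio b hdecay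
  have hexp := Real.one_sub_div_pow_le_exp_neg (n := b) (t := 1) (by exact_mod_cast hb)
  have hT0 : 0 ≤ f T := hnorm ▸ hmono' (empty_subset T)
  rw [hS0, hnorm, sub_zero] at hgap
  rw [one_div (Real.exp 1), ← Real.exp_neg]
  linarith [mul_le_mul_of_nonneg_right hexp hT0]

/-- Nemhauser–Wolsey–Fisher: the greedy algorithm for maximizing a normalized
monotone submodular function under a cardinality constraint `b` achieves at
least a `(1 - 1/e)` fraction of the optimum. -/
theorem greedy_one_minus_inv_e
    {V : Type*} [Fintype V] [DecidableEq V]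
    (f : Finset V → ℝ)
    (hnonneg : ∀ A, 0 ≤ f A)
    (hnorm : f ∅ = 0)
    (hmono : ∀ A B, A ⊆ B → f A ≤ f B)
    (hsub : ∀ A B, f (A ∪ B) + f (A ∩ B) ≤ f A + f B)
    (b : ℕ)
    (S : ℕ → Finset V) (hS0 : S 0 = ∅)
    (hstep : ∀ n, n < b → ∃ v, v ∉ S n ∧ S (n + 1) = insert v (S n) ∧
      ∀ u, f (insert u (S n)) ≤ f (insert v (S n))) :
    ∀ T : Finset V, T.card ≤ b → (1 - 1 / Real.exp 1) * f T ≤ f (S b) :=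
  greedy_one_minus_inv_e_general f hnorm hmono hsub b S hS0 hstep
end

section
/- If A and B are real symmetric matrices with A positive definite and B positive semidefinite, then for positive semidefinite M, the marginal gain g(M) = log det(A + B + M) − log det(A + B) satisfies g(M) ≤ log det(A + M) − log det(A). (Diminishing returns of log det, the key inequality behind submodularity of the D-criterion.) -/
/-!
Write `M = Cᴴ C`. By the matrix determinant lemma, `det (P + M) = det P * det (1 + C P⁻¹ Cᴴ)` for
every positive definite `P`, so the gain `log det (P + M) - log det P` equals
`log det (1 + C P⁻¹ Cᴴ)`. Inversion is antitone and the determinant is monotone in the Loewner order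
on positive definite matrices, hence this gain can only shrink when `P` grows from `A` to `A + B`.
-/

open scoped MatrixOrder ComplexOrder

namespace Matrix

variable {n 𝕜 : Type*} [Fintype n] [DecidableEq n] [RCLike 𝕜] {A B M : Matrix n n 𝕜}

theorem PosSemidef.one_le_det_one_add (hA : A.PosSemidef) : 1 ≤ (1 + A).det := by
  have hH := hA.isHermitian
  have hdiag : 1 + A = Unitary.conjStarAlgAut 𝕜 _ hH.eigenvectorUnitary
      (diagonal fun i ↦ ((1 + hH.eigenvalues i : ℝ) : 𝕜)) := by
    conv_lhs => rw [hH.spectral_theorem,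
      ← map_one (Unitary.conjStarAlgAut 𝕜 _ hH.eigenvectorUnitary), ← map_add, ← diagonal_one,
      diagonal_add]
    simp
  have hprod : (1 : ℝ) ≤ ∏ i, (1 + hH.eigenvalues i) :=
    Finset.one_le_prod fun i _ ↦ by linarith [hA.eigenvalues_nonneg i]
  rw [hdiag, det_map, det_diagonal, ← RCLike.ofReal_prod]
  exact_mod_cast hprod

theorem PosDef.det_le_det (hA : A.PosDef) (hAB : A ≤ B) : A.det ≤ B.det := by
  obtain ⟨C, hC⟩ := CStarAlgebra.nonneg_iff_eq_star_mul_self.mp (sub_nonneg.mpr hAB)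
  have hB : B = A + Cᴴ * C := by rw [← star_eq_conjTranspose, ← hC, add_sub_cancel]
  have hdet : 1 ≤ (1 + C * A⁻¹ * Cᴴ).det :=
    (hA.inv.posSemidef.mul_mul_conjTranspose_same C).one_le_det_one_add
  calc A.det = A.det * 1 := (mul_one _).symm
    _ ≤ A.det * (1 + C * A⁻¹ * Cᴴ).det := mul_le_mul_of_nonneg_left hdet hA.det_pos.le
    _ = B.det := by rw [hB, det_add_mul _ _ hA.det_pos.ne'.isUnit]

/-- Both Schur complements of `fromBlocks B 1 1 A⁻¹` decide whether it is positive semidefinite. -/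
theorem PosDef.inv_le_inv (hA : A.PosDef) (hAB : A ≤ B) : B⁻¹ ≤ A⁻¹ := by
  have hB : B.PosDef := by simpa using hA.add_posSemidef (le_iff.mp hAB)
  have := hB.isUnit.invertible
  have := hA.inv.isUnit.invertible
  have h₁ := hB.fromBlocks₁₁ 1 A⁻¹
  have h₂ := hA.inv.fromBlocks₂₂ B 1
  simp only [conjTranspose_one, Matrix.mul_one, Matrix.one_mul,
    nonsing_inv_nonsing_inv _ hA.det_pos.ne'.isUnit] at h₁ h₂
  exact le_iff.mpr (h₁.mp (h₂.mpr (le_iff.mp hAB)))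

theorem PosDef.det_add_mul_det_le_det_mul_det_add (hA : A.PosDef) (hAB : A ≤ B)
    (hM : M.PosSemidef) : (B + M).det * A.det ≤ B.det * (A + M).det := by
  obtain ⟨C, rfl⟩ := CStarAlgebra.nonneg_iff_eq_star_mul_self.mp hM.nonneg
  have hB : B.PosDef := by simpa using hA.add_posSemidef (le_iff.mp hAB)
  have hgain : (1 + C * B⁻¹ * Cᴴ).det ≤ (1 + C * A⁻¹ * Cᴴ).det := by
    refine (PosDef.one.add_posSemidef ?_).det_le_det ?_
    · exact hB.inv.posSemidef.mul_mul_conjTranspose_same C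
    · exact add_le_add_right (star_right_conjugate_le_conjugate (hA.inv_le_inv hAB) C) 1
  rw [star_eq_conjTranspose, det_add_mul _ _ hB.det_pos.ne'.isUnit,
    det_add_mul _ _ hA.det_pos.ne'.isUnit, mul_right_comm, mul_assoc]
  exact mul_le_mul_of_nonneg_left (mul_le_mul_of_nonneg_left hgain hA.det_pos.le) hB.det_pos.le

end Matrix

/-- Diminishing returns of `log det`: the marginal gain of adding `M` on top of
`A + B` is at most the marginal gain of adding `M` on top of `A`. -/
theorem logdet_diminishing_returns {d : ℕ}
    (A B M : Matrix (Fin d) (Fin d) ℝ)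
    (hA : A.PosDef) (hB : B.PosSemidef) (hM : M.PosSemidef) :
    Real.log (A + B + M).det - Real.log (A + B).det ≤
      Real.log (A + M).det - Real.log A.det := by
  have hAB : A ≤ A + B := le_add_of_nonneg_right hB.nonneg
  have hApB := hA.add_posSemidef hB
  have hApM := hA.add_posSemidef hM
  have hApBpM := hApB.add_posSemidef hM
  have hlog := Real.log_le_log (mul_pos hApBpM.det_pos hA.det_pos)
    (hA.det_add_mul_det_le_det_mul_det_add hAB hM)
  rw [Real.log_mul hApBpM.det_pos.ne' hA.det_pos.ne',
    Real.log_mul hApB.det_pos.ne' hApM.det_pos.ne'] at hlog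
  linarith
end
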